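/- Let p be an odd prime, let Γ be the group presented as ⟨x, y, z : x^p = y^p = z^p = (xyz)^p = 1⟩, and let i, j be integers with 1 ≤ i, j ≤ p-1 such that p does not divide i + j + 1. Let φ : Γ → ℤ/pℤ be the (well-defined) group homomorphism to the additive group ℤ/pℤ determined by φ(x) = 1, φ(y) = i, φ(z) = j. Then φ is surjective and its kernel is exactly the subgroup of Γ generated by the 2p elements x^{ni} (x^i y⁻¹) x^{-ni} and x^{nj} (x^j z⁻¹) x^{-nj} for n = 0, 1, ..., p-1. -/

import Mathlib

/-- The relations of the presentation `⟨x, y, z : x^p = y^p = z^p = (xyz)^p = 1⟩`. -/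
def rels3 (p : ℕ) : Set (FreeGroup (Fin 3)) :=
  {FreeGroup.of 0 ^ p, FreeGroup.of 1 ^ p, FreeGroup.of 2 ^ p,
   (FreeGroup.of 0 * FreeGroup.of 1 * FreeGroup.of 2) ^ p}

/-- The group `Γ = ⟨x, y, z : x^p = y^p = z^p = (xyz)^p = 1⟩`. -/
def Gamma3 (p : ℕ) : Type := PresentedGroup (rels3 p)

instance (p : ℕ) : Group (Gamma3 p) := by unfold Gamma3; infer_instance

/-- The generator `x` of `Γ`. -/
def xg (p : ℕ) : Gamma3 p := PresentedGroup.of 0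

/-- The generator `y` of `Γ`. -/
def yg (p : ℕ) : Gamma3 p := PresentedGroup.of 1

/-- The generator `z` of `Γ`. -/
def zg (p : ℕ) : Gamma3 p := PresentedGroup.of 2

/-!
Every element of `ℤ/pℤ` is killed by `p`, so `φ` exists, and it is onto because `φ x = 1`
generates. Let `N` be the subgroup generated by the `⟨x⟩`-conjugates of `a = xⁱy⁻¹` and
`b = xʲz⁻¹`; as `x ^ p = 1` and `i, j` are units mod `p`, these conjugates are exactly the `2p`
listed elements. `N ≤ ker φ`, and `⟨x⟩` normalizes `N`, so `⟨x⟩N` is a subgroup; it contains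
`x`, `y = a⁻¹xⁱ` and `z = b⁻¹xʲ`, hence is all of `Γ`. If `xᵐn ∈ ker φ` with `n ∈ N`, then
`p ∣ m`, so `xᵐ = 1` and `xᵐn ∈ N`.
-/

open Subgroup
open scoped Pointwise

section ZModHom

variable {G : Type*} [Group G] {p : ℕ}

theorem MonoidHom.surjective_of_map_eq_ofAdd_one (φ : G →* Multiplicative (ZMod p)) {x : G}
    (hφ : φ x = Multiplicative.ofAdd 1) : Function.Surjective φ := fun c =>
  ⟨x ^ (ZMod.cast c.toAdd : ℤ), by
    rw [map_zpow, hφ, ← ofAdd_zsmul, zsmul_one, ZMod.intCast_zmod_cast]; rfl⟩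

theorem eq_one_of_mem_zpowers_of_map_eq_one {x h : G} (hx : x ^ p = 1)
    (φ : G →* Multiplicative (ZMod p)) (hφ : φ x = Multiplicative.ofAdd 1)
    (hh : h ∈ zpowers x) (h1 : φ h = 1) : h = 1 := by
  obtain ⟨m, rfl⟩ := mem_zpowers_iff.1 hh
  rw [map_zpow, hφ, ← ofAdd_zsmul, zsmul_one, ← ofAdd_zero,
    Multiplicative.ofAdd.injective.eq_iff, ZMod.intCast_zmod_eq_zero_iff_dvd] at h1
  exact orderOf_dvd_iff_zpow_eq_one.1
    ((Int.natCast_dvd_natCast.2 (orderOf_dvd_of_pow_eq_one hx)).trans h1)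

end ZModHom

section ConjugatesBy

variable {G : Type*} [Group G]

def conjugatesBy (H : Subgroup G) (a : G) : Set G :=
  {g | ∃ h ∈ H, g = h * a * h⁻¹}

theorem self_mem_conjugatesBy (H : Subgroup G) (a : G) : a ∈ conjugatesBy H a :=
  ⟨1, one_mem H, by group⟩

theorem conj_mem_conjugatesBy {H : Subgroup G} {a g h : G} (hh : h ∈ H)
    (hg : g ∈ conjugatesBy H a) : h * g * h⁻¹ ∈ conjugatesBy H a := by
  obtain ⟨k, hk, rfl⟩ := hg
  exact ⟨h * k, mul_mem hh hk, by group⟩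

theorem conjugatesBy_subset_of_mem {H N : Subgroup G} [hN : N.Normal] {a : G} (ha : a ∈ N) :
    conjugatesBy H a ⊆ N := by
  rintro g ⟨h, -, rfl⟩
  exact hN.conj_mem a ha h

variable {x : G} {p i : ℕ} [NeZero p]

theorem exists_lt_pow_mul_eq_zpow (hx : x ^ p = 1) (hi : i.Coprime p) (m : ℤ) :
    ∃ n < p, x ^ (n * i) = x ^ m := by
  set u := ZMod.unitOfCoprime i hi
  refine ⟨((m : ZMod p) * ↑u⁻¹).val, ZMod.val_lt _, ?_⟩
  have hmod : ((((m : ZMod p) * ↑u⁻¹).val * i : ℕ) : ℤ) ≡ m [ZMOD p] := by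
    rw [← ZMod.intCast_eq_intCast_iff]
    push_cast
    rw [ZMod.natCast_zmod_val, ← ZMod.coe_unitOfCoprime i hi, mul_assoc, Units.inv_mul, mul_one]
  rw [← zpow_natCast, zpow_eq_zpow_iff_modEq]
  exact hmod.of_dvd (Int.natCast_dvd_natCast.2 (orderOf_dvd_of_pow_eq_one hx))

theorem setOf_conj_pow_mul_eq_conjugatesBy (hx : x ^ p = 1) (hi : i.Coprime p) (a : G) :
    {g | ∃ n < p, g = x ^ (n * i) * a * (x ^ (n * i))⁻¹} = conjugatesBy (zpowers x) a := by
  ext g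
  constructor
  · rintro ⟨n, -, rfl⟩
    exact ⟨_, pow_mem (mem_zpowers x) _, rfl⟩
  · rintro ⟨h, hh, rfl⟩
    obtain ⟨m, rfl⟩ := mem_zpowers_iff.1 hh
    obtain ⟨n, hn, hnm⟩ := exists_lt_pow_mul_eq_zpow hx hi m
    exact ⟨n, hn, by rw [hnm]⟩

end ConjugatesBy

namespace Gamma3

variable {p : ℕ}

theorem xg_pow_self : xg p ^ p = 1 := by
  have h := PresentedGroup.one_of_mem (x := FreeGroup.of 0 ^ p) (by simp [rels3] : _ ∈ rels3 p)
  rwa [map_pow] at h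

theorem exists_hom_zmod (a b c : ZMod p) :
    ∃ φ : Gamma3 p →* Multiplicative (ZMod p), φ (xg p) = Multiplicative.ofAdd a ∧
      φ (yg p) = Multiplicative.ofAdd b ∧ φ (zg p) = Multiplicative.ofAdd c := by
  have pow_char (d : ZMod p) : Multiplicative.ofAdd d ^ p = 1 := by
    rw [← ofAdd_nsmul, nsmul_eq_mul, ZMod.natCast_self, zero_mul, ofAdd_zero]
  let f : Fin 3 → Multiplicative (ZMod p) := ![.ofAdd a, .ofAdd b, .ofAdd c]
  have hf : ∀ r ∈ rels3 p, FreeGroup.lift f r = 1 := by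
    simp [rels3, f, pow_char, ← ofAdd_add]
  exact ⟨PresentedGroup.toGroup hf, PresentedGroup.toGroup.of hf, PresentedGroup.toGroup.of hf,
    PresentedGroup.toGroup.of hf⟩

theorem eq_top_of_generators_mem {H : Subgroup (Gamma3 p)} (hx : xg p ∈ H) (hy : yg p ∈ H)
    (hz : zg p ∈ H) : H = ⊤ :=
  eq_top_iff.2 fun g _ => PresentedGroup.generated_by _ H (by
    intro t; fin_cases t
    exacts [hx, hy, hz]) g

theorem ker_eq_closure_conjugatesBy {i j : ℕ} (φ : Gamma3 p →* Multiplicative (ZMod p))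
    (hφx : φ (xg p) = Multiplicative.ofAdd 1) (hφy : φ (yg p) = Multiplicative.ofAdd (i : ZMod p))
    (hφz : φ (zg p) = Multiplicative.ofAdd (j : ZMod p)) :
    φ.ker = closure (conjugatesBy (zpowers (xg p)) (xg p ^ i * (yg p)⁻¹) ∪
      conjugatesBy (zpowers (xg p)) (xg p ^ j * (zg p)⁻¹)) := by
  set a := xg p ^ i * (yg p)⁻¹
  set b := xg p ^ j * (zg p)⁻¹
  set N := closure (conjugatesBy (zpowers (xg p)) a ∪ conjugatesBy (zpowers (xg p)) b)
  have hnorm : zpowers (xg p) ≤ normalizer (N : Set (Gamma3 p)) :=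
    le_normalizer_closure_iff.2 fun h hh g hg => subset_closure <|
      hg.imp (conj_mem_conjugatesBy hh) (conj_mem_conjugatesBy hh)
  have hNker : N ≤ φ.ker := by
    refine (closure_le _).2 (Set.union_subset ?_ ?_) <;> refine conjugatesBy_subset_of_mem ?_ <;>
      simp [a, b, hφx, hφy, hφz, ← ofAdd_nsmul, ← ofAdd_neg, ← ofAdd_add]
  have hsup : zpowers (xg p) ⊔ N = ⊤ := by
    have hx := mem_zpowers (xg p)
    have ha : a ∈ N := subset_closure (Or.inl (self_mem_conjugatesBy _ a))
    have hb : b ∈ N := subset_closure (Or.inr (self_mem_conjugatesBy _ b))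
    refine eq_top_of_generators_mem (mem_sup_left hx) ?_ ?_
    · simpa [a] using mul_mem (mem_sup_right (inv_mem ha)) (mem_sup_left (pow_mem hx i))
    · simpa [b] using mul_mem (mem_sup_right (inv_mem hb)) (mem_sup_left (pow_mem hx j))
  refine le_antisymm (fun g hg => ?_) hNker
  obtain ⟨h, hh, n, hn, rfl⟩ : g ∈ (zpowers (xg p) : Set (Gamma3 p)) * (N : Set (Gamma3 p)) := by
    rw [← coe_mul_of_left_le_normalizer_right _ _ hnorm, hsup]
    trivial
  have h1 : h = 1 := eq_one_of_mem_zpowers_of_map_eq_one xg_pow_self φ hφx hh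
    (by simpa [MonoidHom.mem_ker.1 (hNker hn)] using hg)
  simpa [h1] using hn

end Gamma3

theorem stmt_8_general (p : ℕ) (hp : p.Prime) (i j : ℕ)
    (hi1 : 1 ≤ i) (hi2 : i ≤ p - 1) (hj1 : 1 ≤ j) (hj2 : j ≤ p - 1) :
    (∃ φ : Gamma3 p →* Multiplicative (ZMod p),
        φ (xg p) = Multiplicative.ofAdd (1 : ZMod p) ∧
        φ (yg p) = Multiplicative.ofAdd (i : ZMod p) ∧
        φ (zg p) = Multiplicative.ofAdd (j : ZMod p)) ∧
    (∀ φ : Gamma3 p →* Multiplicative (ZMod p),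
        φ (xg p) = Multiplicative.ofAdd (1 : ZMod p) →
        φ (yg p) = Multiplicative.ofAdd (i : ZMod p) →
        φ (zg p) = Multiplicative.ofAdd (j : ZMod p) →
        Function.Surjective φ ∧
        φ.ker = Subgroup.closure
          {g : Gamma3 p | ∃ n : ℕ, n < p ∧
            (g = xg p ^ (n * i) * (xg p ^ i * (yg p)⁻¹) * (xg p ^ (n * i))⁻¹ ∨
             g = xg p ^ (n * j) * (xg p ^ j * (zg p)⁻¹) * (xg p ^ (n * j))⁻¹)}) := by
  have : NeZero p := ⟨hp.ne_zero⟩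
  have coprime {k : ℕ} (hk1 : 1 ≤ k) (hk2 : k ≤ p - 1) : k.Coprime p :=
    (Nat.coprime_of_lt_prime (by omega) (by omega) hp).symm
  refine ⟨Gamma3.exists_hom_zmod 1 (i : ZMod p) j, fun φ hφx hφy hφz =>
    ⟨φ.surjective_of_map_eq_ofAdd_one hφx, ?_⟩⟩
  rw [Gamma3.ker_eq_closure_conjugatesBy φ hφx hφy hφz]
  simp only [and_or_left, exists_or, Set.ofPred_or]
  rw [setOf_conj_pow_mul_eq_conjugatesBy Gamma3.xg_pow_self (coprime hi1 hi2),
    setOf_conj_pow_mul_eq_conjugatesBy Gamma3.xg_pow_self (coprime hj1 hj2)]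

theorem stmt_8 (p : ℕ) (hp : p.Prime) (hodd : Odd p) (i j : ℕ)
    (hi1 : 1 ≤ i) (hi2 : i ≤ p - 1) (hj1 : 1 ≤ j) (hj2 : j ≤ p - 1)
    (hij : ¬ p ∣ (i + j + 1)) :
    (∃ φ : Gamma3 p →* Multiplicative (ZMod p),
        φ (xg p) = Multiplicative.ofAdd (1 : ZMod p) ∧
        φ (yg p) = Multiplicative.ofAdd (i : ZMod p) ∧
        φ (zg p) = Multiplicative.ofAdd (j : ZMod p)) ∧
    (∀ φ : Gamma3 p →* Multiplicative (ZMod p),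
        φ (xg p) = Multiplicative.ofAdd (1 : ZMod p) →
        φ (yg p) = Multiplicative.ofAdd (i : ZMod p) →
        φ (zg p) = Multiplicative.ofAdd (j : ZMod p) →
        Function.Surjective φ ∧
        φ.ker = Subgroup.closure
          {g : Gamma3 p | ∃ n : ℕ, n < p ∧
            (g = xg p ^ (n * i) * (xg p ^ i * (yg p)⁻¹) * (xg p ^ (n * i))⁻¹ ∨
             g = xg p ^ (n * j) * (xg p ^ j * (zg p)⁻¹) * (xg p ^ (n * j))⁻¹)}) :=
  stmt_8_general p hp i j hi1 hi2 hj1 hj2
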